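/- Let Σ_P, Σ_Q be symmetric positive definite and set A = Σ_Q^{-1/2}Σ_P Σ_Q^{-1/2}. If ‖A − I‖_F < 1, then (1/2)log(|Σ_Q|/|Σ_P|) + (1/2)tr(Σ_Q^{-1}Σ_P − I) = (1/4)‖A − I‖_F² + R, where |R| ≤ Σ_{k≥3} ‖A−I‖_F^k / k. -/

import Mathlib

/-!
Whitening by the square root of `Σ_Q` reduces everything to the eigenvalues `μ i` of the
positive definite matrix `A`: the left-hand side is `½ ∑ (μ i - 1 - log μ i)` and
`‖A - I‖_F² = ∑ (μ i - 1)²`. With `x i = μ i - 1`, the series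
`x - log (1 + x) = x² / 2 + ∑_{k ≥ 3} (-x)^k / k` gives the remainder eigenvalue by eigenvalue,
and `∑ |x i|^k ≤ (∑ x i²)^(k/2)` for `k ≥ 2` bounds it by the series in `‖A - I‖_F`.
-/

open Matrix MeasureTheory

open scoped ComplexOrder in
/-- The positive semidefinite square root (removed from Mathlib; old definition restored). -/
noncomputable def Matrix.PosSemidef.sqrt {n : Type*} [Fintype n] [DecidableEq n] {𝕜 : Type*} [RCLike 𝕜]
    {A : Matrix n n 𝕜} (hA : A.PosSemidef) : Matrix n n 𝕜 :=
  hA.1.eigenvectorUnitary.1 * diagonal ((↑) ∘ (√·) ∘ hA.1.eigenvalues) *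
  (star hA.1.eigenvectorUnitary : Matrix n n 𝕜)

/-- Frobenius norm `‖A‖_F = √(tr (Aᵀ A))`. -/
noncomputable def frob {d : ℕ} (A : Matrix (Fin d) (Fin d) ℝ) : ℝ :=
  Real.sqrt (Matrix.trace (Aᵀ * A))

open Real
open scoped ComplexOrder

namespace Real

lemma hasSum_neg_pow_div_add_three {x : ℝ} (hx : |x| < 1) :
    HasSum (fun n : ℕ => (-x) ^ (n + 3) / (n + 3)) (x - x ^ 2 / 2 - log (1 + x)) := by
  have h := (hasSum_nat_add_iff' 2).2 <|
    hasSum_pow_div_log_of_abs_lt_one (x := -x) (by rwa [abs_neg])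
  convert h using 1
  · rfl
  · funext n; push_cast; ring_nf
  · simp only [Finset.sum_range_succ, Finset.sum_range_zero]
    norm_num
    ring

lemma summable_pow_div_add_three {r : ℝ} (h0 : 0 ≤ r) (h1 : r < 1) :
    Summable (fun n : ℕ => r ^ (n + 3) / (n + 3)) := by
  simpa using (hasSum_neg_pow_div_add_three (x := -r) (by rwa [abs_neg, abs_of_nonneg h0])).summable

lemma abs_sub_sub_log_one_add_le {x : ℝ} (hx : |x| < 1) :
    |x - x ^ 2 / 2 - log (1 + x)| ≤ ∑' n : ℕ, |x| ^ (n + 3) / (n + 3) :=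
  (hasSum_neg_pow_div_add_three hx).norm_le_of_bounded
    (summable_pow_div_add_three (abs_nonneg x) hx).hasSum fun n => by
      rw [norm_div, norm_pow, norm_neg, norm_eq_abs, norm_eq_abs,
        abs_of_pos (by positivity : (0 : ℝ) < n + 3)]

end Real

section FiniteSums

variable {ι : Type*} [Fintype ι]

lemma abs_le_sqrt_sum_sq (x : ι → ℝ) (i : ι) : |x i| ≤ √(∑ j, x j ^ 2) :=
  abs_le_sqrt (Finset.single_le_sum (fun j _ => sq_nonneg (x j)) (Finset.mem_univ i))

lemma sum_abs_pow_add_two_le (x : ι → ℝ) (n : ℕ) :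
    ∑ i, |x i| ^ (n + 2) ≤ √(∑ i, x i ^ 2) ^ (n + 2) :=
  calc ∑ i, |x i| ^ (n + 2) = ∑ i, |x i| ^ n * x i ^ 2 := by
        simp only [pow_add, sq_abs]
    _ ≤ ∑ i, √(∑ j, x j ^ 2) ^ n * x i ^ 2 := by
        gcongr with i
        exact abs_le_sqrt_sum_sq x i
    _ = √(∑ i, x i ^ 2) ^ (n + 2) := by
        rw [← Finset.mul_sum, pow_add, sq_sqrt (by positivity)]

lemma abs_sum_sub_sub_log_one_add_le (x : ι → ℝ) (hx : √(∑ i, x i ^ 2) < 1) :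
    |∑ i, (x i - x i ^ 2 / 2 - log (1 + x i))| ≤
      ∑' n : ℕ, √(∑ i, x i ^ 2) ^ (n + 3) / (n + 3) := by
  have hxi : ∀ i, |x i| < 1 := fun i => (abs_le_sqrt_sum_sq x i).trans_lt hx
  have hsum : ∀ i, Summable fun n : ℕ => |x i| ^ (n + 3) / (n + 3) := fun i =>
    summable_pow_div_add_three (abs_nonneg _) (hxi i)
  calc |∑ i, (x i - x i ^ 2 / 2 - log (1 + x i))|
      ≤ ∑ i, |x i - x i ^ 2 / 2 - log (1 + x i)| := Finset.abs_sum_le_sum_abs _ _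
    _ ≤ ∑ i, ∑' n : ℕ, |x i| ^ (n + 3) / (n + 3) :=
        Finset.sum_le_sum fun i _ => abs_sub_sub_log_one_add_le (hxi i)
    _ = ∑' n : ℕ, ∑ i, |x i| ^ (n + 3) / (n + 3) :=
        (Summable.tsum_finsetSum fun i _ => hsum i).symm
    _ ≤ ∑' n : ℕ, √(∑ i, x i ^ 2) ^ (n + 3) / (n + 3) := by
        refine Summable.tsum_le_tsum (fun n => ?_) (summable_sum fun i _ => hsum i)
          (summable_pow_div_add_three (sqrt_nonneg _) hx)
        rw [← Finset.sum_div]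
        gcongr
        exact sum_abs_pow_add_two_le x (n + 1)

lemma exists_half_sum_sub_log_one_add_eq (x : ι → ℝ) (hx : √(∑ i, x i ^ 2) < 1) :
    ∃ R : ℝ, (1 / 2) * ∑ i, (x i - log (1 + x i)) = (1 / 4) * √(∑ i, x i ^ 2) ^ 2 + R ∧
      |R| ≤ ∑' n : ℕ, √(∑ i, x i ^ 2) ^ (n + 3) / (n + 3) := by
  refine ⟨(1 / 2) * ∑ i, (x i - x i ^ 2 / 2 - log (1 + x i)), ?_, ?_⟩
  · rw [sq_sqrt (by positivity), Finset.mul_sum, Finset.mul_sum, Finset.mul_sum,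
      ← Finset.sum_add_distrib]
    exact Finset.sum_congr rfl fun i _ => by ring
  · have hR := abs_sum_sub_sub_log_one_add_le x hx
    have hB : 0 ≤ ∑' n : ℕ, √(∑ i, x i ^ 2) ^ (n + 3) / (n + 3) :=
      tsum_nonneg fun n => by positivity
    rw [abs_mul, abs_of_pos one_half_pos]
    linarith

end FiniteSums

namespace Matrix

variable {n 𝕜 : Type*} [Fintype n] [DecidableEq n] [RCLike 𝕜]

lemma IsHermitian.trace_cfc {A : Matrix n n 𝕜} (hA : A.IsHermitian) (f : ℝ → ℝ) :
    (cfc f A).trace = ∑ i, (f (hA.eigenvalues i) : 𝕜) := by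
  rw [hA.cfc_eq, IsHermitian.cfc, Unitary.conjStarAlgAut_apply, trace_mul_cycle,
    Unitary.coe_star_mul_self, one_mul, trace_diagonal]
  rfl

namespace PosSemidef

variable {A : Matrix n n 𝕜}

lemma sqrt_eq_cfc (hA : A.PosSemidef) : hA.sqrt = cfc Real.sqrt A := by
  rw [hA.1.cfc_eq]
  rfl

lemma isHermitian_sqrt (hA : A.PosSemidef) : hA.sqrt.IsHermitian := by
  rw [hA.sqrt_eq_cfc]
  exact cfc_predicate _ _

lemma sqrt_mul_self (hA : A.PosSemidef) : hA.sqrt * hA.sqrt = A := by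
  rw [hA.sqrt_eq_cfc, ← cfc_mul _ _ _]
  conv_rhs => rw [← cfc_id' ℝ A hA.1]
  refine cfc_congr fun x hx => ?_
  rw [hA.1.spectrum_real_eq_range_eigenvalues] at hx
  obtain ⟨i, rfl⟩ := hx
  exact mul_self_sqrt (hA.eigenvalues_nonneg i)

end PosSemidef

namespace PosDef

variable {P Q : Matrix n n 𝕜}

lemma isUnit_sqrt (hQ : Q.PosDef) : IsUnit hQ.posSemidef.sqrt :=
  isUnit_of_mul_isUnit_left (hQ.posSemidef.sqrt_mul_self ▸ hQ.isUnit)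

lemma inv_sqrt_mul_mul_inv_sqrt (hP : P.PosDef) (hQ : Q.PosDef) :
    (hQ.posSemidef.sqrt⁻¹ * P * hQ.posSemidef.sqrt⁻¹).PosDef := by
  have hS := hQ.posSemidef.isHermitian_sqrt.inv
  simpa only [hS.eq] using hP.conjTranspose_mul_mul_same
    (mulVec_injective_iff_isUnit.2 (isUnit_nonsing_inv_iff.2 hQ.isUnit_sqrt))

lemma det_inv_sqrt_mul_mul_inv_sqrt (hQ : Q.PosDef) (P : Matrix n n 𝕜) :
    (hQ.posSemidef.sqrt⁻¹ * P * hQ.posSemidef.sqrt⁻¹).det = P.det / Q.det := by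
  have hS : hQ.posSemidef.sqrt.det ≠ 0 := ((isUnit_iff_isUnit_det _).1 hQ.isUnit_sqrt).ne_zero
  conv_rhs => rw [← hQ.posSemidef.sqrt_mul_self]
  rw [det_mul, det_mul, det_mul, det_nonsing_inv, Ring.inverse_eq_inv']
  field_simp

lemma trace_inv_sqrt_mul_mul_inv_sqrt (hQ : Q.PosDef) (P : Matrix n n 𝕜) :
    (hQ.posSemidef.sqrt⁻¹ * P * hQ.posSemidef.sqrt⁻¹).trace = (Q⁻¹ * P).trace := by
  conv_rhs => rw [← hQ.posSemidef.sqrt_mul_self, mul_inv_rev]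
  rw [trace_mul_cycle, Matrix.mul_assoc]

lemma log_det_eq_sum_log_eigenvalues {A : Matrix n n ℝ} (hA : A.PosDef) :
    log A.det = ∑ i, log (hA.1.eigenvalues i) := by
  rw [hA.1.det_eq_prod_eigenvalues]
  exact log_prod fun i _ => (hA.eigenvalues_pos i).ne'

lemma log_det_div_add_trace_sub_one {P Q : Matrix n n ℝ} (hP : P.PosDef) (hQ : Q.PosDef) :
    log (Q.det / P.det) + (Q⁻¹ * P - 1).trace =
      ∑ i, ((hP.inv_sqrt_mul_mul_inv_sqrt hQ).1.eigenvalues i - 1 -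
        log ((hP.inv_sqrt_mul_mul_inv_sqrt hQ).1.eigenvalues i)) := by
  set hA := hP.inv_sqrt_mul_mul_inv_sqrt hQ
  have hdet : Q.det / P.det = (hQ.posSemidef.sqrt⁻¹ * P * hQ.posSemidef.sqrt⁻¹).det⁻¹ := by
    rw [hQ.det_inv_sqrt_mul_mul_inv_sqrt, inv_div]
  rw [hdet, log_inv, hA.log_det_eq_sum_log_eigenvalues, trace_sub, trace_one,
    ← hQ.trace_inv_sqrt_mul_mul_inv_sqrt, hA.1.trace_eq_sum_eigenvalues]
  simp only [Finset.sum_sub_distrib, Finset.sum_const, Finset.card_univ, RCLike.ofReal_real_eq_id,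
    id, nsmul_eq_mul, mul_one]
  ring

end PosDef

end Matrix

lemma frob_sub_one_sq {d : ℕ} {A : Matrix (Fin d) (Fin d) ℝ} (hA : A.IsHermitian) :
    frob (A - 1) ^ 2 = ∑ i, (hA.eigenvalues i - 1) ^ 2 := by
  have hA' : IsSelfAdjoint A := hA
  have hsq : (A - 1)ᵀ * (A - 1) = cfc (fun x : ℝ => (x - 1) ^ 2) A := by
    rw [cfc_pow (fun x : ℝ => x - 1) 2 A, cfc_sub (fun x : ℝ => x) (fun _ => 1) A, cfc_id' ℝ A,
      cfc_const_one ℝ A, sq, ← conjTranspose_eq_transpose_of_trivial,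
      (hA.sub isHermitian_one).eq]
  rw [frob, hsq, hA.trace_cfc, sq_sqrt (by positivity)]
  rfl

theorem stmt6 {d : ℕ} (SP SQ : Matrix (Fin d) (Fin d) ℝ)
    (hP : SP.PosDef) (hQ : SQ.PosDef)
    (h : frob ((hQ.posSemidef.sqrt)⁻¹ * SP * (hQ.posSemidef.sqrt)⁻¹ - 1) < 1) :
    ∃ R : ℝ,
      (1/2) * Real.log (SQ.det / SP.det) + (1/2) * Matrix.trace (SQ⁻¹ * SP - 1)
          = (1/4) * frob ((hQ.posSemidef.sqrt)⁻¹ * SP * (hQ.posSemidef.sqrt)⁻¹ - 1) ^ 2 + R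
        ∧ |R| ≤ ∑' k : ℕ,
            frob ((hQ.posSemidef.sqrt)⁻¹ * SP * (hQ.posSemidef.sqrt)⁻¹ - 1) ^ (k + 3)
              / (k + 3 : ℝ) := by
  set hA := hP.inv_sqrt_mul_mul_inv_sqrt hQ
  have hfrob : frob ((hQ.posSemidef.sqrt)⁻¹ * SP * (hQ.posSemidef.sqrt)⁻¹ - 1) =
      √(∑ i, (hA.1.eigenvalues i - 1) ^ 2) := by
    rw [← frob_sub_one_sq hA.1]
    exact (sqrt_sq (sqrt_nonneg _)).symm
  rw [hfrob] at h ⊢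
  rw [← mul_add, hP.log_det_div_add_trace_sub_one hQ]
  simpa only [add_sub_cancel] using exists_half_sum_sub_log_one_add_eq _ h
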